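/- arXiv:2602.07271 — 5 statements merged into one kernel-verified Lean document; each statement's English description precedes it below -/
import Mathlib

section
/- Let λ : ℕ → ℝ with 0 < λ n for all n, and let μ ≠ 0 be real. Let f₁, f₂ : ℕ → ℝ satisfy that Σ_n (λ n)(f₁ n)² and Σ_n (f₂ n)² converge. Define u₁, u₂ : ℕ → ℝ by u₁ n = (f₁ n + μ · f₂ n)/(1 + μ²·λ n) and u₂ n = (f₂ n − μ·(λ n)·(f₁ n))/(1 + μ²·λ n). Then: (i) for every n, u₁ n − μ·u₂ n = f₁ n and u₂ n + μ·(λ n)·(u₁ n) = f₂ n, and u₁, u₂ are the unique sequences with these two properties; (ii) all of the series Σ_n (λ n)(u₁ n)², Σ_n (u₂ n)², Σ_n (λ n)(u₂ n)², Σ_n (λ n)²(u₁ n)² converge and Σ_n (λ n)(f₁ n)² + Σ_n (f₂ n)² = Σ_n (λ n)(u₁ n)² + Σ_n (u₂ n)² + μ²·( Σ_n (λ n)(u₂ n)² + Σ_n (λ n)²(u₁ n)² ); in particular Σ_n (λ n)(u₁ n)² + Σ_n (u₂ n)² ≤ Σ_n (λ n)(f₁ n)² + Σ_n (f₂ n)².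 (This is the spectral form of the resolvent energy identity for the wave generator 𝔄 = [[0, I],[−A, 0]] on the energy space E.) -/
/-- Spectral form of the resolvent energy identity for the wave generator
`𝔄 = [[0, I], [−A, 0]]` on the energy space: the system `u₁ − μ u₂ = f₁`,
`u₂ + μ λ_n u₁ = f₂` has the unique solution given by the stated formulas, and the
energy identity
`‖f‖²_E = ‖u‖²_E + μ²(Σ λ_n u₂² + Σ λ_n² u₁²)` holds; in particular `‖u‖²_E ≤ ‖f‖²_E`. -/
theorem stmt4 (l : ℕ → ℝ) (hl : ∀ n, 0 < l n) (μ : ℝ) (hμ : μ ≠ 0)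
    (f₁ f₂ : ℕ → ℝ)
    (hf₁ : Summable fun n => l n * (f₁ n) ^ 2)
    (hf₂ : Summable fun n => (f₂ n) ^ 2)
    (u₁ u₂ : ℕ → ℝ)
    (hu₁ : ∀ n, u₁ n = (f₁ n + μ * f₂ n) / (1 + μ ^ 2 * l n))
    (hu₂ : ∀ n, u₂ n = (f₂ n - μ * l n * f₁ n) / (1 + μ ^ 2 * l n)) :
    ((∀ n, u₁ n - μ * u₂ n = f₁ n ∧ u₂ n + μ * l n * u₁ n = f₂ n) ∧
      ∀ v₁ v₂ : ℕ → ℝ,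
        (∀ n, v₁ n - μ * v₂ n = f₁ n ∧ v₂ n + μ * l n * v₁ n = f₂ n) →
          v₁ = u₁ ∧ v₂ = u₂) ∧
    ((Summable fun n => l n * (u₁ n) ^ 2) ∧
      (Summable fun n => (u₂ n) ^ 2) ∧
      (Summable fun n => l n * (u₂ n) ^ 2) ∧
      (Summable fun n => (l n) ^ 2 * (u₁ n) ^ 2) ∧
      (∑' n, l n * (f₁ n) ^ 2) + (∑' n, (f₂ n) ^ 2)
        = (∑' n, l n * (u₁ n) ^ 2) + (∑' n, (u₂ n) ^ 2)
          + μ ^ 2 * ((∑' n, l n * (u₂ n) ^ 2) + ∑' n, (l n) ^ 2 * (u₁ n) ^ 2) ∧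
      (∑' n, l n * (u₁ n) ^ 2) + (∑' n, (u₂ n) ^ 2)
        ≤ (∑' n, l n * (f₁ n) ^ 2) + ∑' n, (f₂ n) ^ 2) := by
  have hμ2 : 0 < μ ^ 2 := by positivity
  have hln : ∀ n, 0 ≤ l n := fun n => (hl n).le
  have hdpos : ∀ n, 0 < 1 + μ ^ 2 * l n := fun n => by
    nlinarith [mul_nonneg (sq_nonneg μ) (hln n)]
  have hd : ∀ n, (1 + μ ^ 2 * l n) ≠ 0 := fun n => (hdpos n).ne'
  have heq : ∀ n, u₁ n - μ * u₂ n = f₁ n ∧ u₂ n + μ * l n * u₁ n = f₂ n := by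
    intro n
    constructor
    · have : u₁ n - μ * u₂ n
          = (f₁ n + μ * f₂ n - μ * (f₂ n - μ * l n * f₁ n)) / (1 + μ ^ 2 * l n) := by
        rw [hu₁, hu₂]; ring
      rw [this, div_eq_iff (hd n)]; ring
    · have : u₂ n + μ * l n * u₁ n
          = (f₂ n - μ * l n * f₁ n + μ * l n * (f₁ n + μ * f₂ n)) / (1 + μ ^ 2 * l n) := by
        rw [hu₁, hu₂]; ring
      rw [this, div_eq_iff (hd n)]; ring
  have hpt : ∀ n, l n * (f₁ n) ^ 2 + (f₂ n) ^ 2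
      = l n * (u₁ n) ^ 2 + (u₂ n) ^ 2 + μ ^ 2 * (l n * (u₂ n) ^ 2 + (l n) ^ 2 * (u₁ n) ^ 2) := by
    intro n
    obtain ⟨h1, h2⟩ := heq n
    rw [← h1, ← h2]; ring
  have hg : Summable fun n => l n * (f₁ n) ^ 2 + (f₂ n) ^ 2 := hf₁.add hf₂
  have na : ∀ n, 0 ≤ l n * (u₁ n) ^ 2 := fun n => mul_nonneg (hln n) (sq_nonneg _)
  have nb : ∀ n, 0 ≤ l n * (u₂ n) ^ 2 := fun n => mul_nonneg (hln n) (sq_nonneg _)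
  have nc : ∀ n, 0 ≤ (l n) ^ 2 * (u₁ n) ^ 2 := fun n => mul_nonneg (sq_nonneg _) (sq_nonneg _)
  have key : ∀ n, 0 ≤ μ ^ 2 * (l n * (u₂ n) ^ 2 + (l n) ^ 2 * (u₁ n) ^ 2) := fun n =>
    mul_nonneg (sq_nonneg μ) (add_nonneg (nb n) (nc n))
  have h1 : Summable fun n => l n * (u₁ n) ^ 2 := by
    apply Summable.of_nonneg_of_le na (fun n => ?_) hg
    nlinarith [hpt n, sq_nonneg (u₂ n), key n]
  have h2 : Summable fun n => (u₂ n) ^ 2 := by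
    apply Summable.of_nonneg_of_le (fun n => sq_nonneg _) (fun n => ?_) hg
    nlinarith [hpt n, na n, key n]
  have hg' : Summable fun n => μ⁻¹ ^ 2 * (l n * (f₁ n) ^ 2 + (f₂ n) ^ 2) := hg.mul_left _
  have hμ' : μ⁻¹ ^ 2 * μ ^ 2 = 1 := by field_simp
  have h3 : Summable fun n => l n * (u₂ n) ^ 2 := by
    apply Summable.of_nonneg_of_le nb (fun n => ?_) hg'
    have hb : μ ^ 2 * (l n * (u₂ n) ^ 2) ≤ l n * (f₁ n) ^ 2 + (f₂ n) ^ 2 := by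
      nlinarith [hpt n, na n, sq_nonneg (u₂ n), mul_nonneg (sq_nonneg μ) (nc n)]
    calc l n * (u₂ n) ^ 2 = μ⁻¹ ^ 2 * (μ ^ 2 * (l n * (u₂ n) ^ 2)) := by
          rw [← mul_assoc, hμ', one_mul]
      _ ≤ μ⁻¹ ^ 2 * (l n * (f₁ n) ^ 2 + (f₂ n) ^ 2) :=
          mul_le_mul_of_nonneg_left hb (sq_nonneg _)
  have h4 : Summable fun n => (l n) ^ 2 * (u₁ n) ^ 2 := by
    apply Summable.of_nonneg_of_le nc (fun n => ?_) hg'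
    have hb : μ ^ 2 * ((l n) ^ 2 * (u₁ n) ^ 2) ≤ l n * (f₁ n) ^ 2 + (f₂ n) ^ 2 := by
      nlinarith [hpt n, na n, sq_nonneg (u₂ n), mul_nonneg (sq_nonneg μ) (nb n)]
    calc (l n) ^ 2 * (u₁ n) ^ 2 = μ⁻¹ ^ 2 * (μ ^ 2 * ((l n) ^ 2 * (u₁ n) ^ 2)) := by
          rw [← mul_assoc, hμ', one_mul]
      _ ≤ μ⁻¹ ^ 2 * (l n * (f₁ n) ^ 2 + (f₂ n) ^ 2) :=
          mul_le_mul_of_nonneg_left hb (sq_nonneg _)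
  have hEq : (∑' n, l n * (f₁ n) ^ 2) + (∑' n, (f₂ n) ^ 2)
      = (∑' n, l n * (u₁ n) ^ 2) + (∑' n, (u₂ n) ^ 2)
        + μ ^ 2 * ((∑' n, l n * (u₂ n) ^ 2) + ∑' n, (l n) ^ 2 * (u₁ n) ^ 2) := by
    rw [← Summable.tsum_add hf₁ hf₂, tsum_congr hpt,
      Summable.tsum_add (h1.add h2) ((h3.add h4).mul_left (μ ^ 2)),
      Summable.tsum_add h1 h2, tsum_mul_left, Summable.tsum_add h3 h4]
  refine ⟨⟨heq, ?_⟩, h1, h2, h3, h4, hEq, ?_⟩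
  · intro v₁ v₂ hv
    constructor <;> funext n <;> obtain ⟨hv1, hv2⟩ := hv n
    · rw [hu₁ n, eq_comm, div_eq_iff (hd n)]
      linear_combination -hv1 - μ * hv2
    · rw [hu₂ n, eq_comm, div_eq_iff (hd n)]
      linear_combination μ * l n * hv1 - hv2
  · rw [hEq]
    have t1 : 0 ≤ ∑' n, l n * (u₂ n) ^ 2 := tsum_nonneg nb
    have t2 : 0 ≤ ∑' n, (l n) ^ 2 * (u₁ n) ^ 2 := tsum_nonneg nc
    nlinarith
end

section
/- Let λ : ℕ → ℝ with 0 < λ n for all n, and let μ be real with |μ| > 1. Let f₁, f₂ : ℕ → ℝ satisfy that Σ_n (λ n)(f₁ n)² and Σ_n (f₂ n)² converge. Define u₁, u₂ : ℕ → ℝ by u₁ n = (μ·f₁ n + f₂ n)/(μ² + λ n) and u₂ n = (μ·f₂ n − (λ n)·(f₁ n))/(μ² + λ n), so that for every n, μ·u₁ n − u₂ n = f₁ n and μ·u₂ n + (λ n)·(u₁ n) = f₂ n. Then the series Σ_n (λ n)(u₁ n)² and Σ_n (u₂ n)² converge and ( Σ_n (λ n)(u₁ n)² + Σ_n (u₂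 n)² )^(1/2) ≤ (|μ| − 1)^(−1) · ( Σ_n (λ n)(f₁ n)² + Σ_n (f₂ n)² )^(1/2). (This is the spectral form of the resolvent bound ‖(μ I − 𝔄)^{-1}‖ ≤ 1/(|μ| − 1) for the wave generator on the energy space.) -/
/-- Spectral form of the resolvent bound `‖(μ I − 𝔄)⁻¹‖ ≤ 1/(|μ| − 1)` for the wave
generator on the energy space, for real `μ` with `|μ| > 1`. -/
theorem stmt5 (l : ℕ → ℝ) (hl : ∀ n, 0 < l n) (μ : ℝ) (hμ : 1 < |μ|)
    (f₁ f₂ : ℕ → ℝ)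
    (hf₁ : Summable fun n => l n * (f₁ n) ^ 2)
    (hf₂ : Summable fun n => (f₂ n) ^ 2)
    (u₁ u₂ : ℕ → ℝ)
    (hu₁ : ∀ n, u₁ n = (μ * f₁ n + f₂ n) / (μ ^ 2 + l n))
    (hu₂ : ∀ n, u₂ n = (μ * f₂ n - l n * f₁ n) / (μ ^ 2 + l n)) :
    (∀ n, μ * u₁ n - u₂ n = f₁ n ∧ μ * u₂ n + l n * u₁ n = f₂ n) ∧
    (Summable fun n => l n * (u₁ n) ^ 2) ∧
    (Summable fun n => (u₂ n) ^ 2) ∧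
    Real.sqrt ((∑' n, l n * (u₁ n) ^ 2) + ∑' n, (u₂ n) ^ 2)
      ≤ (|μ| - 1)⁻¹ * Real.sqrt ((∑' n, l n * (f₁ n) ^ 2) + ∑' n, (f₂ n) ^ 2) := by
  have hd : ∀ n, 0 < μ ^ 2 + l n := fun n => by have := hl n; positivity
  have hc : (0:ℝ) < |μ| - 1 := by linarith
  have habs : μ ^ 2 = |μ| ^ 2 := (sq_abs μ).symm
  have hc2 : ∀ n, (|μ| - 1) ^ 2 ≤ μ ^ 2 + l n := by
    intro n
    have := hl n
    nlinarith [abs_nonneg μ]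
  -- key identity
  have key : ∀ n, l n * (u₁ n) ^ 2 + (u₂ n) ^ 2
      = (l n * (f₁ n) ^ 2 + (f₂ n) ^ 2) / (μ ^ 2 + l n) := by
    intro n
    rw [hu₁, hu₂]
    have h := (hd n).ne'
    field_simp
    ring
  have hFnn : ∀ n, 0 ≤ l n * (f₁ n) ^ 2 + (f₂ n) ^ 2 := fun n => by
    have := hl n; positivity
  have hbound : ∀ n, l n * (u₁ n) ^ 2 + (u₂ n) ^ 2
      ≤ ((|μ| - 1) ^ 2)⁻¹ * (l n * (f₁ n) ^ 2 + (f₂ n) ^ 2) := by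
    intro n
    rw [key n, inv_mul_eq_div]
    exact div_le_div_of_nonneg_left (hFnn n) (by positivity) (hc2 n)
  have hF : Summable fun n => l n * (f₁ n) ^ 2 + (f₂ n) ^ 2 := hf₁.add hf₂
  have hS : Summable fun n => l n * (u₁ n) ^ 2 + (u₂ n) ^ 2 := by
    apply Summable.of_nonneg_of_le (fun n => by have := hl n; positivity) hbound
    exact hF.mul_left _
  have hs1 : Summable fun n => l n * (u₁ n) ^ 2 := by
    apply Summable.of_nonneg_of_le (fun n => by have := hl n; positivity) _ hS
    intro n; nlinarith [sq_nonneg (u₂ n)]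
  have hs2 : Summable fun n => (u₂ n) ^ 2 := by
    apply Summable.of_nonneg_of_le (fun n => by positivity) _ hS
    intro n; nlinarith [sq_nonneg (u₁ n), (hl n).le]
  refine ⟨?_, hs1, hs2, ?_⟩
  · intro n
    have h := (hd n).ne'
    constructor <;> rw [hu₁, hu₂] <;> field_simp <;> ring
  · have hsum : (∑' n, l n * (u₁ n) ^ 2) + ∑' n, (u₂ n) ^ 2
        = ∑' n, (l n * (u₁ n) ^ 2 + (u₂ n) ^ 2) := (Summable.tsum_add hs1 hs2).symm
    have hFsum : (∑' n, l n * (f₁ n) ^ 2) + ∑' n, (f₂ n) ^ 2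
        = ∑' n, (l n * (f₁ n) ^ 2 + (f₂ n) ^ 2) := (Summable.tsum_add hf₁ hf₂).symm
    rw [hsum, hFsum]
    have hle : (∑' n, (l n * (u₁ n) ^ 2 + (u₂ n) ^ 2))
        ≤ ((|μ| - 1) ^ 2)⁻¹ * ∑' n, (l n * (f₁ n) ^ 2 + (f₂ n) ^ 2) := by
      rw [← tsum_mul_left]
      exact Summable.tsum_le_tsum hbound hS (hF.mul_left _)
    calc Real.sqrt (∑' n, (l n * (u₁ n) ^ 2 + (u₂ n) ^ 2))
        ≤ Real.sqrt (((|μ| - 1) ^ 2)⁻¹ * ∑' n, (l n * (f₁ n) ^ 2 + (f₂ n) ^ 2)) :=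
          Real.sqrt_le_sqrt hle
      _ = (|μ| - 1)⁻¹ * Real.sqrt (∑' n, (l n * (f₁ n) ^ 2 + (f₂ n) ^ 2)) := by
          rw [Real.sqrt_mul (by positivity), Real.sqrt_inv, Real.sqrt_sq hc.le]
end

section
/- Let H be a real Hilbert space, Φ : ℕ → H a Hilbert basis of H, and λ : ℕ → ℝ with 0 < λ n for all n. Fix z ∈ H and t ∈ ℝ, and let v := ∫₀ᵗ S(σ) z dσ (an H-valued Bochner integral). Then Σ_n (λ n)²·⟨v, Φ n⟩² < ∞ (i.e. v ∈ D(A)), and Σ_n (λ n)·⟨v, Φ n⟩·(Φ n) = z − C(t) z, i.e. C(t) z − z = −A ∫₀ᵗ S(σ) z dσ. -/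
/-!
In the coordinates `z_n = ⟪z, Φ n⟫`, `S(σ) z` has coefficients `λ_n^(-1/2) sin(√λ_n σ) z_n`.
Since `|sin a - sin b| ≤ |a - b|`, these are bounded by `|σ| |z_n|` and change by at most
`|σ - σ'| |z_n|` between `σ` and `σ'`, so by Parseval `σ ↦ S(σ) z` is `‖z‖`-Lipschitz, hence
integrable. Pairing with `Φ n` commutes with the integral, which gives
`λ_n ⟪v, Φ n⟫ = (1 - cos(√λ_n t)) z_n`. These coefficients are bounded by `2 |z_n|`, so `v ∈ D(A)`,
and they are exactly the coefficients of `z - C(t) z`.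
-/

open scoped RealInnerProductSpace

lemma sq_le_sq_mul_sq_of_abs_le {a c x : ℝ} (h : |a| ≤ c * |x|) : a ^ 2 ≤ c ^ 2 * x ^ 2 := by
  rw [← mul_pow]
  exact sq_le_sq.2 (h.trans ((le_abs_self _).trans_eq (by rw [abs_mul, abs_mul, abs_abs])))

namespace HilbertBasis

variable {ι H : Type*} [NormedAddCommGroup H] [InnerProductSpace ℝ H] (b : HilbertBasis ι ℝ H)

lemma hasSum_inner_sq (x : H) : HasSum (fun i => ⟪x, b i⟫ ^ 2) (‖x‖ ^ 2) := by
  have h := b.hasSum_inner_mul_inner x x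
  simp only [real_inner_comm x, real_inner_self_eq_norm_sq, ← sq] at h
  exact h

lemma tsum_inner_smul (x : H) : ∑' i, ⟪x, b i⟫ • b i = x := by
  simpa only [b.repr_apply_apply, real_inner_comm] using (b.hasSum_repr x).tsum_eq

lemma summable_inner_smul (x : H) : Summable fun i => ⟪x, b i⟫ • b i := by
  simpa only [b.repr_apply_apply, real_inner_comm] using (b.hasSum_repr x).summable

variable {a : ι → ℝ}

lemma hasSum_smul_of_summable_sq (ha : Summable fun i => a i ^ 2) :
    ∃ y : H, HasSum (fun i => a i • b i) y ∧ ∀ i, ⟪y, b i⟫ = a i := by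
  have hmem : Memℓp a 2 := memℓp_gen (by simpa using ha)
  refine ⟨b.repr.symm ⟨a, hmem⟩, b.hasSum_repr_symm _, fun i => ?_⟩
  rw [real_inner_comm, ← b.repr_apply_apply, LinearIsometryEquiv.apply_symm_apply]

lemma summable_smul_of_summable_sq (ha : Summable fun i => a i ^ 2) :
    Summable fun i => a i • b i :=
  let ⟨_, hy, _⟩ := b.hasSum_smul_of_summable_sq ha; hy.summable

lemma inner_tsum_smul (ha : Summable fun i => a i ^ 2) (i : ι) :
    ⟪∑' j, a j • b j, b i⟫ = a i := by
  obtain ⟨y, hy, hyi⟩ := b.hasSum_smul_of_summable_sq ha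
  rw [hy.tsum_eq, hyi]

variable {C : ℝ}

lemma summable_sq_of_abs_le (x : H) (ha : ∀ i, |a i| ≤ C * |⟪x, b i⟫|) :
    Summable fun i => a i ^ 2 :=
  ((b.hasSum_inner_sq x).summable.mul_left (C ^ 2)).of_nonneg_of_le (fun _ => sq_nonneg _)
    fun _ => sq_le_sq_mul_sq_of_abs_le (ha _)

lemma norm_tsum_smul_le (hC : 0 ≤ C) (x : H) (ha : ∀ i, |a i| ≤ C * |⟪x, b i⟫|) :
    ‖∑' i, a i • b i‖ ≤ C * ‖x‖ := by
  have ha2 := b.summable_sq_of_abs_le x ha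
  have hnorm := b.hasSum_inner_sq (∑' i, a i • b i)
  simp only [b.inner_tsum_smul ha2] at hnorm
  refine (pow_le_pow_iff_left₀ (norm_nonneg _) (by positivity) two_ne_zero).1 ?_
  rw [← hnorm.tsum_eq, mul_pow, ← (b.hasSum_inner_sq x).tsum_eq, ← tsum_mul_left]
  exact ha2.tsum_le_tsum (fun i => sq_le_sq_mul_sq_of_abs_le (ha i))
    ((b.hasSum_inner_sq x).summable.mul_left _)

end HilbertBasis

noncomputable def sineKernel (μ σ : ℝ) : ℝ := μ ^ (-(1 / 2 : ℝ)) * Real.sin (√μ * σ)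

section SineKernel

variable {μ : ℝ} (hμ : 0 < μ)
include hμ

lemma sineKernel_eq : sineKernel μ = fun σ => (√μ)⁻¹ * Real.sin (√μ * σ) := by
  ext σ
  rw [sineKernel, Real.rpow_neg hμ.le, Real.sqrt_eq_rpow]

lemma abs_sineKernel_sub_le (s s' : ℝ) : |sineKernel μ s - sineKernel μ s'| ≤ |s - s'| := by
  have hω : 0 < √μ := Real.sqrt_pos.2 hμ
  rw [sineKernel_eq hμ, ← mul_sub, abs_mul, abs_inv, abs_of_pos hω, inv_mul_le_iff₀ hω]
  calc |Real.sin (√μ * s) - Real.sin (√μ * s')| ≤ |√μ * s - √μ * s'| :=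
        Real.abs_sin_sub_sin_le _ _
    _ = √μ * |s - s'| := by rw [← mul_sub, abs_mul, abs_of_pos hω]

lemma abs_sineKernel_sub_mul_le (s s' x : ℝ) :
    |(sineKernel μ s - sineKernel μ s') * x| ≤ |s - s'| * |x| := by
  rw [abs_mul]
  exact mul_le_mul_of_nonneg_right (abs_sineKernel_sub_le hμ s s') (abs_nonneg x)

lemma integral_sineKernel (t : ℝ) :
    ∫ σ in (0 : ℝ)..t, sineKernel μ σ = (1 - Real.cos (√μ * t)) / μ := by
  have hω : √μ ≠ 0 := (Real.sqrt_pos.2 hμ).ne'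
  rw [sineKernel_eq hμ, intervalIntegral.integral_const_mul,
    intervalIntegral.integral_comp_mul_left Real.sin hω, integral_sin]
  simp only [mul_zero, Real.cos_zero, smul_eq_mul]
  rw [← mul_assoc, ← mul_inv, Real.mul_self_sqrt hμ.le, inv_mul_eq_div]

end SineKernel

noncomputable def sineFamily {ι H : Type*} [NormedAddCommGroup H] [InnerProductSpace ℝ H]
    (Φ : HilbertBasis ι ℝ H) (l : ι → ℝ) (σ : ℝ) (z : H) : H :=
  ∑' n, (sineKernel (l n) σ * ⟪z, Φ n⟫) • Φ n

section SineFamily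

variable {ι H : Type*} [NormedAddCommGroup H] [InnerProductSpace ℝ H] (Φ : HilbertBasis ι ℝ H)
  {l : ι → ℝ} (hl : ∀ n, 0 < l n)
include hl

lemma summable_sq_sineKernel_mul_inner (σ : ℝ) (z : H) :
    Summable fun n => (sineKernel (l n) σ * ⟪z, Φ n⟫) ^ 2 :=
  Φ.summable_sq_of_abs_le z fun n => by
    simpa [sineKernel] using abs_sineKernel_sub_mul_le (hl n) σ 0 ⟪z, Φ n⟫

lemma inner_sineFamily (σ : ℝ) (z : H) (n : ι) :
    ⟪sineFamily Φ l σ z, Φ n⟫ = sineKernel (l n) σ * ⟪z, Φ n⟫ :=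
  Φ.inner_tsum_smul (summable_sq_sineKernel_mul_inner Φ hl σ z) n

lemma sineFamily_sub (s s' : ℝ) (z : H) :
    sineFamily Φ l s z - sineFamily Φ l s' z
      = ∑' n, ((sineKernel (l n) s - sineKernel (l n) s') * ⟪z, Φ n⟫) • Φ n := by
  rw [sineFamily, sineFamily, ← Summable.tsum_sub
    (Φ.summable_smul_of_summable_sq (summable_sq_sineKernel_mul_inner Φ hl s z))
    (Φ.summable_smul_of_summable_sq (summable_sq_sineKernel_mul_inner Φ hl s' z))]
  simp only [← sub_smul, ← sub_mul]

lemma lipschitzWith_sineFamily (z : H) : LipschitzWith ‖z‖₊ (sineFamily Φ l · z) :=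
  LipschitzWith.of_dist_le_mul fun s s' => by
    rw [dist_eq_norm, Real.dist_eq, sineFamily_sub Φ hl, coe_nnnorm, mul_comm]
    exact Φ.norm_tsum_smul_le (abs_nonneg _) z fun n => abs_sineKernel_sub_mul_le (hl n) s s' _

lemma inner_integral_sineFamily [CompleteSpace H] (z : H) (t : ℝ) (n : ι) :
    ⟪∫ σ in (0 : ℝ)..t, sineFamily Φ l σ z, Φ n⟫
      = (1 - Real.cos (√(l n) * t)) / l n * ⟪z, Φ n⟫ := by
  have hint : IntervalIntegrable (sineFamily Φ l · z) MeasureTheory.volume 0 t :=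
    (lipschitzWith_sineFamily Φ hl z).continuous.intervalIntegrable 0 t
  rw [real_inner_comm, ← innerSL_apply_apply ℝ,
    ← (innerSL ℝ (Φ n)).intervalIntegral_comp_comm hint]
  simp only [innerSL_apply_apply, real_inner_comm _ (Φ n), inner_sineFamily Φ hl]
  rw [intervalIntegral.integral_mul_const, integral_sineKernel (hl n)]

end SineFamily

/-- `C(t) z − z = −A ∫₀ᵗ S(σ) z dσ`: with `v = ∫₀ᵗ S(σ) z dσ`, one has `v ∈ D(A)`
(i.e. `Σ_n λ_n² ⟨v, Φ_n⟩² < ∞`) and `A v = z − C(t) z`. -/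
theorem stmt11 {H : Type*} [NormedAddCommGroup H] [InnerProductSpace ℝ H]
    [CompleteSpace H] (Φ : HilbertBasis ℕ ℝ H) (l : ℕ → ℝ) (hl : ∀ n, 0 < l n)
    (z : H) (t : ℝ) (v : H)
    (hv : v = ∫ σ in (0 : ℝ)..t,
      ∑' n, ((l n) ^ (-(1 / 2 : ℝ)) * Real.sin (Real.sqrt (l n) * σ) * ⟪z, Φ n⟫)
        • (Φ n : H)) :
    (Summable fun n => (l n) ^ 2 * ⟪v, Φ n⟫ ^ 2) ∧
    ∑' n, (l n * ⟪v, Φ n⟫) • (Φ n : H)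
      = z - ∑' n, (Real.cos (Real.sqrt (l n) * t) * ⟪z, Φ n⟫) • (Φ n : H) := by
  have hcoeff : ∀ n, l n * ⟪v, Φ n⟫ = (1 - Real.cos (√(l n) * t)) * ⟪z, Φ n⟫ := fun n => by
    rw [show v = ∫ σ in (0 : ℝ)..t, sineFamily Φ l σ z from hv, inner_integral_sineFamily Φ hl,
      ← mul_assoc, mul_div_cancel₀ _ (hl n).ne']
  have hbound : ∀ n, |l n * ⟪v, Φ n⟫| ≤ 2 * |⟪z, Φ n⟫| := fun n => by
    rw [hcoeff, abs_mul]
    gcongr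
    exact abs_le.2 ⟨by linarith [Real.cos_le_one (√(l n) * t)],
      by linarith [Real.neg_one_le_cos (√(l n) * t)]⟩
  have hcos : Summable fun n => (Real.cos (√(l n) * t) * ⟪z, Φ n⟫) • Φ n :=
    Φ.summable_smul_of_summable_sq <| Φ.summable_sq_of_abs_le z (C := 1) fun n => by
      rw [abs_mul, one_mul]
      exact mul_le_of_le_one_left (abs_nonneg _) (Real.abs_cos_le_one _)
  refine ⟨by simpa only [mul_pow] using Φ.summable_sq_of_abs_le z hbound, ?_⟩
  calc ∑' n, (l n * ⟪v, Φ n⟫) • Φ n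
      = ∑' n, (⟪z, Φ n⟫ • Φ n - (Real.cos (√(l n) * t) * ⟪z, Φ n⟫) • Φ n) :=
        tsum_congr fun n => by rw [hcoeff, sub_mul, one_mul, sub_smul]
    _ = z - ∑' n, (Real.cos (√(l n) * t) * ⟪z, Φ n⟫) • Φ n := by
        rw [(Φ.summable_inner_smul z).tsum_sub hcos, Φ.tsum_inner_smul]
end

section
/- Let H be a real Hilbert space, Φ : ℕ → H a Hilbert basis of H, and λ : ℕ → ℝ with 0 < λ n for all n. Let z ∈ H satisfy Σ_n (λ n)·⟨z, Φ n⟩² < ∞ (i.e. z ∈ D(A^{1/2})). Then for every t ∈ ℝ, the map t ↦ C(t) z is differentiable at t (as an H-valued function) with derivative −Σ_n √(λ n)·sin(√(λ n)·t)·⟨z, Φ n⟩·(Φ n), i.e. d/dt C(t) z = −A S(t) z. -/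
open scoped RealInnerProductSpace ENNReal

private lemma mem_two {f : ℕ → ℝ} (h : Summable fun n => f n ^ 2) :
    Memℓp f 2 := by
  apply memℓp_gen
  have he : (fun n => ‖f n‖ ^ (2 : ℝ≥0∞).toReal) = fun n => f n ^ 2 := by
    ext n
    rw [ENNReal.toReal_ofNat, Real.rpow_two, Real.norm_eq_abs, sq_abs]
  rw [he]; exact h

private lemma cos_lip (u v : ℝ) : |Real.cos u - Real.cos v| ≤ |u - v| := by
  rw [Real.cos_sub_cos, abs_mul, abs_mul]
  have h1 := Real.abs_sin_le_one ((u + v) / 2)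
  have h2 : |Real.sin ((u - v) / 2)| ≤ |(u - v) / 2| := Real.abs_sin_le_abs
  have h3 : |(-2 : ℝ)| = 2 := by norm_num
  calc |(-2 : ℝ)| * |Real.sin ((u + v) / 2)| * |Real.sin ((u - v) / 2)|
      ≤ 2 * 1 * |(u - v) / 2| := by rw [h3]; gcongr
    _ = |u - v| := by
        have h4 : |(2 : ℝ)| = 2 := by norm_num
        rw [abs_div, h4]; ring

private lemma norm_sq_eq (f : lp (fun _ : ℕ => ℝ) 2) :
    ‖f‖ ^ 2 = ∑' n, (f n) ^ 2 := by
  rw [← real_inner_self_eq_norm_sq, lp.inner_eq_tsum]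
  congr 1; ext n
  simp [RCLike.inner_apply, sq]

/-- For `z ∈ D(A^{1/2})`, the map `t ↦ C(t) z` is differentiable with
`d/dt C(t) z = −A S(t) z = −Σ_n √λ_n sin(√λ_n t) ⟨z, Φ_n⟩ Φ_n`. -/
theorem stmt12 {H : Type*} [NormedAddCommGroup H] [InnerProductSpace ℝ H]
    [CompleteSpace H] (Φ : HilbertBasis ℕ ℝ H) (l : ℕ → ℝ) (hl : ∀ n, 0 < l n)
    (z : H) (hz : Summable fun n => l n * ⟪z, Φ n⟫ ^ 2) :
    ∀ t : ℝ,
      HasDerivAt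
        (fun s : ℝ => ∑' n, (Real.cos (Real.sqrt (l n) * s) * ⟪z, Φ n⟫) • (Φ n : H))
        (-∑' n, (Real.sqrt (l n) * Real.sin (Real.sqrt (l n) * t) * ⟪z, Φ n⟫)
          • (Φ n : H)) t := by
  intro t
  set a : ℕ → ℝ := fun n => Real.sqrt (l n) with ha_def
  set zc : ℕ → ℝ := fun n => ⟪z, Φ n⟫ with hzc_def
  have ha_sq : ∀ n, a n ^ 2 = l n := fun n => Real.sq_sqrt (hl n).le
  have ha_nonneg : ∀ n, 0 ≤ a n := fun n => Real.sqrt_nonneg _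
  have hz' : Summable fun n => (a n * zc n) ^ 2 := by
    have he : (fun n => (a n * zc n) ^ 2) = fun n => l n * zc n ^ 2 := by
      ext n; rw [mul_pow, ha_sq]
    rw [he]; exact hz
  have hzsq : Summable fun n => zc n ^ 2 := by
    have h2 := lp.memℓp (Φ.repr z)
    rw [memℓp_gen_iff (by norm_num : (0:ℝ) < (2 : ℝ≥0∞).toReal)] at h2
    have he : (fun n => ‖Φ.repr z n‖ ^ (2 : ℝ≥0∞).toReal) = fun n => zc n ^ 2 := by
      ext n
      rw [ENNReal.toReal_ofNat, Real.rpow_two, Real.norm_eq_abs, sq_abs,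
        Φ.repr_apply_apply, real_inner_comm]
    rwa [he] at h2
  have memC : ∀ s : ℝ, Memℓp (fun n => Real.cos (a n * s) * zc n) 2 := by
    intro s
    apply mem_two
    apply hzsq.of_nonneg_of_le (fun n => sq_nonneg _)
    intro n
    rw [mul_pow]
    nlinarith [Real.cos_sq_le_one (a n * s), sq_nonneg (zc n),
      sq_nonneg (Real.cos (a n * s)),
      mul_nonneg (sq_nonneg (Real.cos (a n * s))) (sq_nonneg (zc n))]
  have memW : Memℓp (fun n => a n * Real.sin (a n * t) * zc n) 2 := by
    apply mem_two
    apply hz'.of_nonneg_of_le (fun n => sq_nonneg _)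
    intro n
    have h1 : (a n * Real.sin (a n * t) * zc n) ^ 2
        = Real.sin (a n * t) ^ 2 * (a n * zc n) ^ 2 := by ring
    rw [h1]
    nlinarith [Real.sin_sq_le_one (a n * t), sq_nonneg (a n * zc n),
      sq_nonneg (Real.sin (a n * t)),
      mul_nonneg (sq_nonneg (Real.sin (a n * t))) (sq_nonneg (a n * zc n))]
  set C : ℝ → lp (fun _ : ℕ => ℝ) 2 := fun s => ⟨fun n => Real.cos (a n * s) * zc n, memC s⟩
    with hC_def
  set W : lp (fun _ : ℕ => ℝ) 2 := ⟨fun n => a n * Real.sin (a n * t) * zc n, memW⟩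
    with hW_def
  have hCcoe : ∀ s n, (C s : ∀ _ : ℕ, ℝ) n = Real.cos (a n * s) * zc n := fun s n => rfl
  have hWcoe : ∀ n, (W : ∀ _ : ℕ, ℝ) n = a n * Real.sin (a n * t) * zc n := fun n => rfl
  have key : HasDerivAt C (-W) t := by
    rw [hasDerivAt_iff_tendsto_slope, tendsto_iff_norm_sub_tendsto_zero]
    have coord : ∀ s : ℝ, ∀ n, (slope C t s - -W : lp (fun _ : ℕ => ℝ) 2) n
        = (s - t)⁻¹ * (Real.cos (a n * s) * zc n - Real.cos (a n * t) * zc n)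
          + a n * Real.sin (a n * t) * zc n := by
      intro s n
      rw [slope_def_module, sub_neg_eq_add]
      have e1 : (((s - t)⁻¹ • (C s - C t) + W : lp (fun _ : ℕ => ℝ) 2) : ∀ _ : ℕ, ℝ) n
          = (s - t)⁻¹ • ((C s : ∀ _ : ℕ, ℝ) n - (C t : ∀ _ : ℕ, ℝ) n) + (W : ∀ _ : ℕ, ℝ) n := by
        rw [lp.coeFn_add, Pi.add_apply, lp.coeFn_smul, Pi.smul_apply, lp.coeFn_sub, Pi.sub_apply]
      rw [e1, hCcoe, hCcoe, hWcoe]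
      simp [smul_eq_mul]
    have main : Filter.Tendsto (fun s => ∑' n,
        ((slope C t s - -W : lp (fun _ : ℕ => ℝ) 2) n) ^ 2)
        (nhdsWithin t {t}ᶜ) (nhds 0) := by
      have h0 : (0 : ℝ) = ∑' _n : ℕ, (0 : ℝ) := by simp
      rw [h0]
      apply tendsto_tsum_of_dominated_convergence
        (bound := fun n => (2 * (a n * |zc n|)) ^ 2)
      · have he : (fun n => (2 * (a n * |zc n|)) ^ 2) = fun n => 4 * (a n * zc n) ^ 2 := by
          ext n
          have : (2 * (a n * |zc n|)) ^ 2 = 4 * (a n ^ 2 * |zc n| ^ 2) := by ring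
          rw [this, sq_abs]; ring
        rw [he]; exact hz'.mul_left 4
      · intro n
        have hderiv : HasDerivAt (fun s => Real.cos (a n * s) * zc n)
            (-Real.sin (a n * t) * a n * zc n) t := by
          have h1 : HasDerivAt (fun s : ℝ => a n * s) (a n) t := by
            simpa using (hasDerivAt_id t).const_mul (a n)
          exact ((Real.hasDerivAt_cos (a n * t)).comp t h1).mul_const (zc n)
        have hslope := hasDerivAt_iff_tendsto_slope.mp hderiv
        have htend : Filter.Tendsto (fun s => (slope C t s - -W : lp (fun _ : ℕ => ℝ) 2) n)
            (nhdsWithin t {t}ᶜ) (nhds 0) := by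
          have h2 := hslope.add_const (a n * Real.sin (a n * t) * zc n)
          have heq : -Real.sin (a n * t) * a n * zc n
              + a n * Real.sin (a n * t) * zc n = 0 := by ring
          rw [heq] at h2
          refine h2.congr fun s => ?_
          rw [coord s n, slope_def_module]
          simp [smul_eq_mul]
        simpa using htend.pow 2
      · filter_upwards [self_mem_nhdsWithin] with s hs n
        have hst : s ≠ t := hs
        have hd : |(slope C t s - -W : lp (fun _ : ℕ => ℝ) 2) n| ≤ 2 * (a n * |zc n|) := by
          rw [coord s n]
          have h1 : |(s - t)⁻¹ * (Real.cos (a n * s) * zc n - Real.cos (a n * t) * zc n)|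
              ≤ a n * |zc n| := by
            rw [← sub_mul, abs_mul, abs_mul]
            have hcos : |Real.cos (a n * s) - Real.cos (a n * t)| ≤ a n * |s - t| := by
              calc |Real.cos (a n * s) - Real.cos (a n * t)|
                  ≤ |a n * s - a n * t| := cos_lip _ _
                _ = a n * |s - t| := by
                    rw [← mul_sub, abs_mul, abs_of_nonneg (ha_nonneg n)]
            calc |(s - t)⁻¹| * (|Real.cos (a n * s) - Real.cos (a n * t)| * |zc n|)
                ≤ |(s - t)⁻¹| * (a n * |s - t| * |zc n|) := by gcongr
              _ = (|(s - t)⁻¹| * |s - t|) * (a n * |zc n|) := by ring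
              _ = a n * |zc n| := by
                  rw [abs_inv, inv_mul_cancel₀ (abs_ne_zero.mpr (sub_ne_zero.mpr hst)),
                    one_mul]
          have h2 : |a n * Real.sin (a n * t) * zc n| ≤ a n * |zc n| := by
            rw [abs_mul, abs_mul, abs_of_nonneg (ha_nonneg n)]
            have hsin := Real.abs_sin_le_one (a n * t)
            calc a n * |Real.sin (a n * t)| * |zc n| ≤ a n * 1 * |zc n| := by gcongr
              _ = a n * |zc n| := by ring
          calc |_ + _| ≤ _ + _ := abs_add_le _ _
            _ ≤ a n * |zc n| + a n * |zc n| := add_le_add h1 h2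
            _ = 2 * (a n * |zc n|) := by ring
        calc ‖((slope C t s - -W : lp (fun _ : ℕ => ℝ) 2) n) ^ 2‖
            = |(slope C t s - -W : lp (fun _ : ℕ => ℝ) 2) n| ^ 2 := by
              rw [Real.norm_eq_abs, abs_pow, sq_abs, ← sq_abs]
          _ ≤ (2 * (a n * |zc n|)) ^ 2 := by
              apply pow_le_pow_left₀ (abs_nonneg _) hd
    have hnorm : (fun s => ‖slope C t s - -W‖)
        = fun s => Real.sqrt (∑' n, ((slope C t s - -W : lp (fun _ : ℕ => ℝ) 2) n) ^ 2) := by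
      funext s
      rw [← norm_sq_eq, Real.sqrt_sq (norm_nonneg _)]
    rw [hnorm]
    have := (Real.continuous_sqrt.tendsto 0).comp main
    simpa [Function.comp_def] using this
  -- transfer to H via the isometry
  have L := (Φ.repr.symm.toContinuousLinearEquiv :
      lp (fun _ : ℕ => ℝ) 2 ≃L[ℝ] H).toContinuousLinearMap
  have hcomp : HasDerivAt (fun s => Φ.repr.symm (C s)) (Φ.repr.symm (-W)) t := by
    have h := ((Φ.repr.symm.toContinuousLinearEquiv :
        lp (fun _ : ℕ => ℝ) 2 ≃L[ℝ] H).toContinuousLinearMap).hasFDerivAt.comp_hasDerivAt t key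
    simpa [Function.comp_def] using h
  have hfun : (fun s : ℝ => ∑' n, (Real.cos (a n * s) * zc n) • (Φ n : H))
      = fun s => Φ.repr.symm (C s) := by
    funext s
    exact (Φ.hasSum_repr_symm (C s)).tsum_eq
  have hder : (-∑' n, (a n * Real.sin (a n * t) * zc n) • (Φ n : H))
      = Φ.repr.symm (-W) := by
    rw [map_neg]
    congr 1
    exact (Φ.hasSum_repr_symm W).tsum_eq
  rw [hfun, hder]
  exact hcomp
end

section
/- Let H be a real Hilbert space, Φ : ℕ → H a Hilbert basis of H, and λ : ℕ → ℝ with 0 < λ n for all n. Let T > 0, let f : [0, T] → H be Bochner integrable, and let a, b ∈ H with Σ_n (λ n)·⟨a, Φ n⟩² < ∞. For n ∈ ℕ write a_n = ⟨a, Φ n⟩, b_n = ⟨b, Φ n⟩, f_n(s) = ⟨f(s), Φ n⟩, and for t ∈ [0, T] define y_n(t) = cos(√(λ n)·t)·a_n + (λ n)^(−1/2)·sin(√(λ n)·t)·b_n + ∫₀ᵗ (λ n)^(−1/2)·sin(√(λ n)·(t−s))·f_n(s) ds and v_n(t) = −√(λ n)·sin(√(λ n)·t)·a_n + cos(√(λ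 n)·t)·b_n + ∫₀ᵗ cos(√(λ n)·(t−s))·f_n(s) ds. Then for every t ∈ [0, T] the series Σ_n (λ n)·y_n(t)² and Σ_n v_n(t)² converge, and ( Σ_n (λ n)·y_n(t)² + Σ_n v_n(t)² )^(1/2) ≤ ( Σ_n (λ n)·a_n² + Σ_n b_n² )^(1/2) + ∫₀ᵗ ‖f(s)‖_H ds. (Energy estimate for the Duhamel solution of the abstract wave equation y″ + A y = f, y(0) = a, y′(0) = b.) -/
open scoped RealInnerProductSpace

open MeasureTheory intervalIntegral in
/-- Energy estimate for the Duhamel solution of the abstract wave equation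
`y″ + A y = f`, `y(0) = a`, `y′(0) = b`: for every `t ∈ [0, T]` the energy series of
the Duhamel coefficients converge and the energy norm is bounded by the initial energy
plus `∫₀ᵗ ‖f(s)‖ ds`. -/
theorem stmt14 {H : Type*} [NormedAddCommGroup H] [InnerProductSpace ℝ H]
    [CompleteSpace H] (Φ : HilbertBasis ℕ ℝ H) (l : ℕ → ℝ) (hl : ∀ n, 0 < l n)
    (T : ℝ) (hT : 0 < T) (f : ℝ → H)
    (hf : MeasureTheory.IntegrableOn f (Set.Icc 0 T))
    (a b : H) (ha : Summable fun n => l n * ⟪a, Φ n⟫ ^ 2)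
    (y v : ℕ → ℝ → ℝ)
    (hy : ∀ n t, y n t = Real.cos (Real.sqrt (l n) * t) * ⟪a, Φ n⟫
      + (l n) ^ (-(1 / 2 : ℝ)) * Real.sin (Real.sqrt (l n) * t) * ⟪b, Φ n⟫
      + ∫ s in (0 : ℝ)..t,
          (l n) ^ (-(1 / 2 : ℝ)) * Real.sin (Real.sqrt (l n) * (t - s)) * ⟪f s, Φ n⟫)
    (hv : ∀ n t, v n t = -(Real.sqrt (l n) * Real.sin (Real.sqrt (l n) * t) * ⟪a, Φ n⟫)
      + Real.cos (Real.sqrt (l n) * t) * ⟪b, Φ n⟫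
      + ∫ s in (0 : ℝ)..t, Real.cos (Real.sqrt (l n) * (t - s)) * ⟪f s, Φ n⟫) :
    ∀ t ∈ Set.Icc (0 : ℝ) T,
      (Summable fun n => l n * (y n t) ^ 2) ∧
      (Summable fun n => (v n t) ^ 2) ∧
      Real.sqrt ((∑' n, l n * (y n t) ^ 2) + ∑' n, (v n t) ^ 2)
        ≤ Real.sqrt ((∑' n, l n * ⟪a, Φ n⟫ ^ 2) + ∑' n, ⟪b, Φ n⟫ ^ 2)
          + ∫ s in (0 : ℝ)..t, ‖f s‖ := by
  intro t ht
  obtain ⟨ht0, htT⟩ := ht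
  classical
  have hωpos : ∀ n, 0 < Real.sqrt (l n) := fun n => Real.sqrt_pos.mpr (hl n)
  have hrp : ∀ n, Real.sqrt (l n) * (l n) ^ (-(1 / 2 : ℝ)) = 1 := by
    intro n
    rw [Real.rpow_neg (hl n).le, ← Real.sqrt_eq_rpow]
    exact mul_inv_cancel₀ (hωpos n).ne'
  -- integrability of `f` on `[0, t]`
  have hfI : IntervalIntegrable f volume 0 t := by
    rw [intervalIntegrable_iff_integrableOn_Ioc_of_le ht0]
    exact hf.mono_set fun x hx => ⟨hx.1.le, hx.2.trans htT⟩
  have hfn : ∀ n : ℕ, IntervalIntegrable (fun s => ⟪f s, Φ n⟫) volume 0 t := by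
    intro n
    have h1 := hfI
    rw [intervalIntegrable_iff] at h1 ⊢
    have h3 : (fun s => ⟪f s, Φ n⟫) = fun s => (innerSL ℝ (Φ n)) (f s) := by
      funext s; rw [innerSL_apply_apply, real_inner_comm]
    rw [h3]
    exact (innerSL ℝ (Φ n)).integrable_comp h1
  -- summability of the `b` coefficients (Bessel)
  have hb : Summable fun n => ⟪b, Φ n⟫ ^ 2 := by
    have := Φ.orthonormal.inner_products_summable (x := b)
    simpa [Real.norm_eq_abs, sq_abs, real_inner_comm] using this
  -- rearranged formula for `√(l n) * y n t`
  have hy' : ∀ n : ℕ, Real.sqrt (l n) * y n t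
      = Real.cos (Real.sqrt (l n) * t) * (Real.sqrt (l n) * ⟪a, Φ n⟫)
        + Real.sin (Real.sqrt (l n) * t) * ⟪b, Φ n⟫
        + ∫ s in (0 : ℝ)..t, Real.sin (Real.sqrt (l n) * (t - s)) * ⟪f s, Φ n⟫ := by
    intro n
    rw [hy, mul_add, mul_add, ← intervalIntegral.integral_const_mul]
    congr 1
    · linear_combination (Real.sin (Real.sqrt (l n) * t) * ⟪b, Φ n⟫) * hrp n
    · apply intervalIntegral.integral_congr
      intro s _
      linear_combination (Real.sin (Real.sqrt (l n) * (t - s)) * ⟪f s, Φ n⟫) * hrp n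
  set M : ℝ := Real.sqrt ((∑' n, l n * ⟪a, Φ n⟫ ^ 2) + ∑' n, ⟪b, Φ n⟫ ^ 2)
      + ∫ s in (0 : ℝ)..t, ‖f s‖ with hM
  have hM0 : 0 ≤ M := by
    apply add_nonneg (Real.sqrt_nonneg _)
    exact intervalIntegral.integral_nonneg ht0 fun s _ => norm_nonneg _
  -- the key finite-dimensional estimate
  have key : ∀ F : Finset ℕ, (∑ n ∈ F, (l n * y n t ^ 2 + v n t ^ 2)) ≤ M ^ 2 := by
    intro F
    set ι := {x // x ∈ F} × Fin 2 with hι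
    set g : ι → ℝ → ℝ := fun p s =>
      (if p.2 = 0 then Real.sin (Real.sqrt (l p.1) * (t - s))
        else Real.cos (Real.sqrt (l p.1) * (t - s))) * ⟪f s, Φ p.1⟫ with hg
    have hgI : ∀ p : ι, IntervalIntegrable (g p) volume 0 t := by
      intro p
      apply (hfn p.1).continuousOn_mul
      apply Continuous.continuousOn
      rcases eq_or_ne p.2 0 with h | h
      · simp only [if_pos h]; fun_prop
      · simp only [if_neg h]; fun_prop
    set U : EuclideanSpace ℝ ι := WithLp.toLp 2 fun (p : ι) =>
      if p.2 = 0 then Real.cos (Real.sqrt (l p.1) * t) * (Real.sqrt (l p.1) * ⟪a, Φ p.1⟫)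
          + Real.sin (Real.sqrt (l p.1) * t) * ⟪b, Φ p.1⟫
        else -(Real.sin (Real.sqrt (l p.1) * t) * (Real.sqrt (l p.1) * ⟪a, Φ p.1⟫))
          + Real.cos (Real.sqrt (l p.1) * t) * ⟪b, Φ p.1⟫ with hU
    set G : ℝ → EuclideanSpace ℝ ι := fun s => WithLp.toLp 2 fun (p : ι) => g p s with hGdef
    have hap : ∀ (c : ι → EuclideanSpace ℝ ι) (p : ι), (∑ q : ι, c q) p = ∑ q : ι, c q p :=
      fun c p => by rw [WithLp.ofLp_sum, Finset.sum_apply]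
    have hGeq : G = ∑ p : ι, (fun s => g p s • EuclideanSpace.single p (1 : ℝ)) := by
      funext s
      rw [Finset.sum_apply]
      ext p
      rw [hap]
      simp [hGdef, EuclideanSpace.single_apply]
      symm
      exact (Fintype.sum_eq_single p fun q hq => if_neg (Ne.symm hq)).trans (if_pos rfl)
    have hsc : ∀ (p : ι) (c : EuclideanSpace ℝ ι),
        IntervalIntegrable (fun s => g p s • c) volume 0 t := by
      intro p c
      have h := hgI p
      rw [intervalIntegrable_iff] at h ⊢
      exact h.smul_const c
    have hGI : IntervalIntegrable G volume 0 t := by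
      rw [hGeq]
      exact IntervalIntegrable.sum _ fun p _ => hsc p _
    set W : EuclideanSpace ℝ ι := ∫ s in (0 : ℝ)..t, G s with hW
    have hWsum : W = ∑ q : ι, (∫ s in (0 : ℝ)..t, g q s) • EuclideanSpace.single q (1 : ℝ) := by
      rw [hW, hGeq]
      have h6 : (∫ s in (0 : ℝ)..t,
            (∑ p : ι, (fun s => g p s • EuclideanSpace.single p (1 : ℝ))) s)
          = ∫ s in (0 : ℝ)..t, ∑ p : ι, g p s • EuclideanSpace.single p (1 : ℝ) := by
        apply intervalIntegral.integral_congr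
        intro s _
        rw [Finset.sum_apply]
      rw [h6, intervalIntegral.integral_finset_sum fun q _ => hsc q _]
      simp [intervalIntegral.integral_smul_const]
    have hWp : ∀ p : ι, W p = ∫ s in (0 : ℝ)..t, g p s := by
      intro p
      rw [hWsum, hap]
      simp [EuclideanSpace.single_apply]
      exact (Fintype.sum_eq_single p fun q hq => if_neg (Ne.symm hq)).trans (if_pos rfl)
    -- pointwise bound on the norm of G
    have hGle : ∀ s : ℝ, ‖G s‖ ≤ ‖f s‖ := by
      intro s
      rw [EuclideanSpace.norm_eq]
      have h2 : ∑ p : ι, ‖G s p‖ ^ 2 ≤ ‖f s‖ ^ 2 := by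
        have h3 : ∑ p : ι, ‖G s p‖ ^ 2 = ∑ n ∈ F, ⟪f s, Φ n⟫ ^ 2 := by
          rw [Fintype.sum_prod_type]
          rw [Finset.univ_eq_attach, ← Finset.sum_attach F fun n => ⟪f s, Φ n⟫ ^ 2]
          apply Finset.sum_congr rfl
          intro n _
          rw [Fin.sum_univ_two]
          simp only [hGdef, hg, Real.norm_eq_abs, sq_abs,
            if_pos rfl, if_neg (by decide : ¬((1 : Fin 2) = 0)), if_true, if_false]
          linear_combination (⟪f s, Φ n.1⟫ ^ 2) *
            Real.sin_sq_add_cos_sq (Real.sqrt (l n.1) * (t - s))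
        rw [h3]
        have := Φ.orthonormal.sum_inner_products_le (f s) (s := F)
        simpa [Real.norm_eq_abs, sq_abs, real_inner_comm] using this
      calc Real.sqrt (∑ p : ι, ‖G s p‖ ^ 2) ≤ Real.sqrt (‖f s‖ ^ 2) := Real.sqrt_le_sqrt h2
        _ = ‖f s‖ := Real.sqrt_sq (norm_nonneg _)
    have hWnorm : ‖W‖ ≤ ∫ s in (0 : ℝ)..t, ‖f s‖ := by
      calc ‖W‖ ≤ ∫ s in (0 : ℝ)..t, ‖G s‖ :=
            intervalIntegral.norm_integral_le_integral_norm ht0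
        _ ≤ ∫ s in (0 : ℝ)..t, ‖f s‖ :=
            intervalIntegral.integral_mono_on ht0 hGI.norm hfI.norm fun s _ => hGle s
    have hUnorm : ‖U‖ ≤ Real.sqrt ((∑' n, l n * ⟪a, Φ n⟫ ^ 2) + ∑' n, ⟪b, Φ n⟫ ^ 2) := by
      rw [EuclideanSpace.norm_eq]
      apply Real.sqrt_le_sqrt
      have h4 : ∑ p : ι, ‖U p‖ ^ 2 = ∑ n ∈ F, (l n * ⟪a, Φ n⟫ ^ 2 + ⟪b, Φ n⟫ ^ 2) := by
        rw [Fintype.sum_prod_type]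
        rw [Finset.univ_eq_attach, ← Finset.sum_attach F fun n => l n * ⟪a, Φ n⟫ ^ 2 + ⟪b, Φ n⟫ ^ 2]
        apply Finset.sum_congr rfl
        intro n _
        rw [Fin.sum_univ_two]
        simp only [hU, Real.norm_eq_abs, sq_abs,
          if_pos rfl, if_neg (by decide : ¬((1 : Fin 2) = 0)), if_true, if_false]
        linear_combination ((Real.sqrt (l n.1) * ⟪a, Φ n.1⟫) ^ 2 + ⟪b, Φ n.1⟫ ^ 2) *
            Real.sin_sq_add_cos_sq (Real.sqrt (l n.1) * t)
          + ⟪a, Φ n.1⟫ ^ 2 * Real.sq_sqrt (hl n.1).le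
      rw [h4]
      have h5 : ∑ n ∈ F, (l n * ⟪a, Φ n⟫ ^ 2 + ⟪b, Φ n⟫ ^ 2)
          = (∑ n ∈ F, l n * ⟪a, Φ n⟫ ^ 2) + ∑ n ∈ F, ⟪b, Φ n⟫ ^ 2 := Finset.sum_add_distrib
      rw [h5]
      apply add_le_add
      · exact Summable.sum_le_tsum F (fun n _ => mul_nonneg (hl n).le (sq_nonneg _)) ha
      · exact Summable.sum_le_tsum F (fun n _ => sq_nonneg _) hb
    -- coordinates of `U + W`
    have hcoord0 : ∀ n : {x // x ∈ F}, (U + W) (n, 0) = Real.sqrt (l n.1) * y n.1 t := by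
      intro n
      rw [PiLp.add_apply, hWp (n, 0), hy' n.1]
      simp only [hU, hg, if_pos rfl, if_true, if_false]
    have hcoord1 : ∀ n : {x // x ∈ F}, (U + W) (n, 1) = v n.1 t := by
      intro n
      rw [PiLp.add_apply, hWp (n, 1), hv]
      simp only [hU, hg, if_neg (by decide : ¬((1 : Fin 2) = 0)), if_true, if_false]
      ring
    have hfinal : ∑ n ∈ F, (l n * y n t ^ 2 + v n t ^ 2) = ‖U + W‖ ^ 2 := by
      rw [EuclideanSpace.norm_eq, Real.sq_sqrt (Finset.sum_nonneg fun p _ => sq_nonneg _)]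
      rw [Fintype.sum_prod_type]
      rw [Finset.univ_eq_attach, ← Finset.sum_attach F fun n => l n * y n t ^ 2 + v n t ^ 2]
      apply Finset.sum_congr rfl
      intro n _
      rw [Fin.sum_univ_two, hcoord0 n, hcoord1 n]
      rw [Real.norm_eq_abs, sq_abs, Real.norm_eq_abs, sq_abs, mul_pow,
        Real.sq_sqrt (hl n.1).le]
    calc ∑ n ∈ F, (l n * y n t ^ 2 + v n t ^ 2) = ‖U + W‖ ^ 2 := hfinal
      _ ≤ (‖U‖ + ‖W‖) ^ 2 := by
          apply pow_le_pow_left₀ (norm_nonneg _) (norm_add_le _ _)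
      _ ≤ M ^ 2 := by
          apply pow_le_pow_left₀ (add_nonneg (norm_nonneg _) (norm_nonneg _))
          exact add_le_add hUnorm hWnorm
  -- assemble
  have hnonneg : ∀ n, 0 ≤ l n * y n t ^ 2 + v n t ^ 2 := by
    intro n
    have := (hl n).le
    positivity
  have hcomb : Summable fun n => l n * y n t ^ 2 + v n t ^ 2 :=
    summable_of_sum_le hnonneg key
  have hym : Summable fun n => l n * y n t ^ 2 := by
    apply Summable.of_nonneg_of_le (fun n => by have := (hl n).le; positivity)
      (fun n => le_add_of_nonneg_right (sq_nonneg _)) hcomb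
  have hvm : Summable fun n => v n t ^ 2 := by
    apply Summable.of_nonneg_of_le (fun n => sq_nonneg _)
      (fun n => le_add_of_nonneg_left (by have := (hl n).le; positivity)) hcomb
  refine ⟨hym, hvm, ?_⟩
  have htsum : (∑' n, l n * y n t ^ 2) + ∑' n, v n t ^ 2 ≤ M ^ 2 := by
    rw [← Summable.tsum_add hym hvm]
    exact Summable.tsum_le_of_sum_le hcomb key
  calc Real.sqrt ((∑' n, l n * y n t ^ 2) + ∑' n, v n t ^ 2)
      ≤ Real.sqrt (M ^ 2) := Real.sqrt_le_sqrt htsum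
    _ = M := Real.sqrt_sq hM0
end
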